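/- Let X = {a, b} × ℤ (where a and b are two distinct labels) and let m : X → X be given by m(i, z) = (i, z + 1). Suppose ≽* is a complete transitive relation on X that is coherent under m (x ≽* y implies m(x) ≽* m(y), and x ≻* y implies m(x) ≻* m(y)) and satisfies (a, z) ≻* (b, z + 1) and (a, z) ≻* (b, z − 1) for every z ∈ ℤ. Then (a, 0) ≻* (b, 0). -/
import Mathlib

/-- The strict part of a binary relation: `x ≻ y` iff `x ≽ y` and not `y ≽ x`. -/
def StrictRel {X : Type*} (R : X → X → Prop) (x y : X) : Prop := R x y ∧ ¬ R y x

/-- On `X = {a, b} × ℤ` (with `a = true`, `b = false`) with the shift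
`m(i, z) = (i, z + 1)`: any complete transitive `m`-coherent relation with
`(a, z) ≻ (b, z+1)` and `(a, z) ≻ (b, z-1)` for all `z` satisfies `(a,0) ≻ (b,0)`. -/
theorem forced_strict_ranking
    (R : Bool × ℤ → Bool × ℤ → Prop)
    (hcomp : ∀ x y, R x y ∨ R y x) (htrans : Transitive R)
    (hcoh : ∀ x y : Bool × ℤ,
      (R x y → R (x.1, x.2 + 1) (y.1, y.2 + 1)) ∧
      (StrictRel R x y → StrictRel R (x.1, x.2 + 1) (y.1, y.2 + 1)))
    (h1 : ∀ z : ℤ, StrictRel R (true, z) (false, z + 1))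
    (h2 : ∀ z : ℤ, StrictRel R (true, z) (false, z - 1)) :
    StrictRel R (true, 0) (false, 0) := by
  have key : ¬ R (false, 0) (true, 0) := by
    intro hR
    have hR1 : R (false, 1) (true, 1) := (hcoh (false, 0) (true, 0)).1 hR
    have h21 : R (true, 1) (false, 0) := by
      have := (h2 1).1
      norm_num at this
      exact this
    exact (h1 0).2 (htrans hR1 (htrans h21 hR))
  refine ⟨?_, key⟩
  rcases hcomp (true, 0) (false, 0) with h | h
  · exact h
  · exact absurd h key
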